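/- (Odd case dominance order.) Let $\lambda_0 = (\lambda_0^{(1)} \ge \cdots \ge \lambda_0^{(n-1)} \ge |\lambda_0^{(n)}|)$ and $\mu_0$ be integer vectors of length $n$ satisfying these dominance constraints for type $D_n$, and let $\lambda_1, \mu_1$ be partitions of length $n$. Then $(\lambda_0,\lambda_1) - (\mu_0,\mu_1)$ (viewed as $\sum_i (\lambda_0^{(i)}-\mu_0^{(i)})\varepsilon_i + \sum_j (\lambda_1^{(j)}-\mu_1^{(j)})\delta_j$) lies in the $\mathbb{N}$-span of $R^{N+}_{\bar 1} = \{\varepsilon_i+\delta_j\} \cup \{\varepsilon_i-\delta_j\}_{i<j} \cup \{\delta_i-\varepsilon_j\}_{i\le j}$ if and only if the following hold: all partial sums of the shuffled sequence $(\lambda_1^{(1)}, \lambda_0^{(1)}, \lambda_1^{(2)}, \lambda_0^{(2)}, \ldots)$ up to position $2n-1$ dominate the corresponding partial sums for $(\mu_1^{(1)}, \mu_0^{(1)}, \ldots)$; the full sums $\sum_j \lambda_1^{(j)} + \sum_i \lambda_0^{(i)}$ and $\sum_j \mu_1^{(j)} + \sum_i \mu_0^{(i)}$ differ by a nonnegative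 even integer; and $\sum_j \lambda_1^{(j)} + \sum_{i<n} \lambda_0^{(i)} - \lambda_0^{(n)} \ge \sum_j \mu_1^{(j)} + \sum_{i<n}\mu_0^{(i)} - \mu_0^{(n)}$. -/

import Mathlib

open Finset

/-- The set of odd positive roots of the mixed Borel of `𝔬𝔰𝔭(2n|2n)` (odd case). -/
def oddRset (n : ℕ) (M : Type*) [AddCommGroup M] [Module ℚ M]
    (ε δ : Fin n → M) : Set M :=
  {x | ∃ i j : Fin n, x = ε i + δ j} ∪
  {x | ∃ i j : Fin n, i < j ∧ x = ε i - δ j} ∪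
  {x | ∃ i j : Fin n, i ≤ j ∧ x = δ i - ε j}

/-- Partial sum of the first `k` terms of the shuffled sequence
`(λ₁⁽¹⁾, λ₀⁽¹⁾, λ₁⁽²⁾, λ₀⁽²⁾, …)` (1-based positions). -/
def shuffledPartialSum (n : ℕ) (l1 l0 : Fin n → ℤ) (k : ℕ) : ℤ :=
  (∑ j : Fin n, if 2 * (j : ℕ) + 1 ≤ k then l1 j else 0)
    + (∑ i : Fin n, if 2 * (i : ℕ) + 2 ≤ k then l0 i else 0)

/-!
Write `x₀, x₁, x₂, … = δ₁, ε₁, δ₂, ε₂, …` for the shuffled basis and `S_k` for the partial sums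
of the shuffled coefficient sequence of `(λ₀,λ₁) − (μ₀,μ₁)`.

Necessity: extend to `ℚ`-linear functionals on the ambient space the coordinate weights
"`1` on `x₀, …, x_{k-1}`, `0` elsewhere" (value `S_k`), "`1` everywhere" (value `S_{2n}`,
and `2` or `0` on each odd root), and "`1` everywhere except `-1` on `εₙ`" (value
`S_{2n} - 2(λ₀ⁿ - μ₀ⁿ)`). The first and last are nonnegative on every odd root, the second is
even on them, so the same holds on their `ℕ`-span.

Sufficiency: the consecutive differences `x_p - x_{p+1}` are odd roots (`δᵢ - εᵢ` and
`εᵢ - δᵢ₊₁`), and Abel summation writes the vector as `∑_{p < 2n-2} S_{p+1} (x_p - x_{p+1})`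
plus the tail `S_{2n-1} δₙ + c εₙ`, where `c = S_{2n} - S_{2n-1}`. If `S_{2n} = 2s` with
`c ≤ s`, the tail is `(s - c)(δₙ - εₙ) + s(εₙ + δₙ)`.
-/

lemma LinearIndependent.exists_linearMap_apply_eq {ι K M : Type*} [Field K]
    [AddCommGroup M] [Module K M] {v : ι → M} (hv : LinearIndependent K v) (u : ι → K) :
    ∃ φ : M →ₗ[K] K, ∀ i, φ (v i) = u i := by
  let B := Module.Basis.span hv
  obtain ⟨φ, hφ⟩ := LinearMap.exists_extend (B.constr K u)
  refine ⟨φ, fun i => ?_⟩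
  have := LinearMap.congr_fun hφ (B i)
  rwa [LinearMap.comp_apply, B.constr_basis, Submodule.subtype_apply,
    Module.Basis.span_apply] at this

lemma AddSubmonoid.zsmul_mem_of_nonneg {M : Type*} [AddCommGroup M] (S : AddSubmonoid M)
    {x : M} (hx : x ∈ S) {c : ℤ} (hc : 0 ≤ c) : c • x ∈ S := by
  lift c to ℕ using hc
  rw [natCast_zsmul]
  exact S.nsmul_mem hx c

lemma sum_range_succ_zsmul_by_parts {M : Type*} [AddCommGroup M] (q : ℕ → ℤ) (x : ℕ → M)
    (N : ℕ) :
    ∑ p ∈ range (N + 1), q p • x p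
      = ∑ k ∈ range N, (∑ j ∈ range (k + 1), q j) • (x k - x (k + 1))
        + (∑ j ∈ range (N + 1), q j) • x N := by
  induction N with
  | zero => simp
  | succ N ih =>
    rw [sum_range_succ _ (N + 1), ih, sum_range_succ (fun k => _ • (x k - x (k + 1))) N,
      sum_range_succ q (N + 1), smul_sub, add_smul]
    abel

lemma sum_range_two_mul {M : Type*} [AddCommMonoid M] (g : ℕ → M) (n : ℕ) :
    ∑ p ∈ range (2 * n), g p = ∑ j : Fin n, g (2 * j) + ∑ i : Fin n, g (2 * i + 1) := by
  rw [Fin.sum_univ_eq_sum_range (fun j => g (2 * j)),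
    Fin.sum_univ_eq_sum_range (fun i => g (2 * i + 1)), ← sum_add_distrib]
  induction n with
  | zero => simp
  | succ n ih => rw [Nat.mul_succ, sum_range_succ, sum_range_succ, sum_range_succ, ih, add_assoc]

section Shuffle

variable {n : ℕ}

def shuffle {α : Type*} [Zero α] (b a : Fin n → α) (p : ℕ) : α :=
  if h : p < 2 * n then
    if p % 2 = 0 then b ⟨p / 2, by omega⟩ else a ⟨p / 2, by omega⟩
  else 0

section

variable {α : Type*} [Zero α] (b a : Fin n → α)

@[simp]
lemma shuffle_two_mul (j : Fin n) : shuffle b a (2 * j) = b j := by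
  rw [shuffle, dif_pos (by omega), if_pos (by omega)]
  congr 1; ext; simp

@[simp]
lemma shuffle_two_mul_add_one (i : Fin n) : shuffle b a (2 * i + 1) = a i := by
  rw [shuffle, dif_pos (by omega), if_neg (by omega)]
  congr 1; ext; simp; omega

lemma shuffle_of_le {p : ℕ} (hp : 2 * n ≤ p) : shuffle b a p = 0 := by
  rw [shuffle, dif_neg (by omega)]

end

lemma sum_shuffle_smul {M : Type*} [AddCommGroup M] (c d : Fin n → ℤ) (ε δ : Fin n → M) :
    ∑ p ∈ range (2 * n), shuffle d c p • shuffle δ ε p = ∑ i, c i • ε i + ∑ j, d j • δ j := by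
  rw [sum_range_two_mul, add_comm]
  simp only [shuffle_two_mul, shuffle_two_mul_add_one]

lemma sum_range_shuffle (d c : Fin n → ℤ) (k : ℕ) :
    ∑ p ∈ range k, shuffle d c p = shuffledPartialSum n d c k := by
  have hsupp : ∑ p ∈ range k, shuffle d c p
      = ∑ p ∈ range (2 * n), if p < k then shuffle d c p else 0 := by
    rw [← sum_filter]
    refine (sum_subset (fun _ hp => mem_range.2 (mem_filter.1 hp).2) fun p hk hp => ?_).symm
    exact shuffle_of_le d c (by simp only [mem_range, mem_filter, not_and, not_lt] at hk hp; omega)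
  rw [hsupp, sum_range_two_mul, shuffledPartialSum]
  -- `p < k` unfolds to `p + 1 ≤ k`
  congr 1 <;> refine sum_congr rfl fun j _ => ?_ <;>
    simp only [shuffle_two_mul, shuffle_two_mul_add_one] <;> rfl

lemma shuffledPartialSum_sub (b b' a a' : Fin n → ℤ) (k : ℕ) :
    shuffledPartialSum n (b - b') (a - a') k
      = shuffledPartialSum n b a k - shuffledPartialSum n b' a' k := by
  simp only [shuffledPartialSum, add_sub_add_comm, ← sum_sub_distrib, Pi.sub_apply]
  congr 1 <;> refine sum_congr rfl fun _ _ => ?_ <;> split_ifs <;> simp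

lemma shuffledPartialSum_two_mul (d c : Fin n → ℤ) :
    shuffledPartialSum n d c (2 * n) = ∑ j, d j + ∑ i, c i := by
  unfold shuffledPartialSum
  congr 1 <;> exact sum_congr rfl fun i _ => if_pos (by omega)

end Shuffle

section OddRoots

variable {n : ℕ} {M : Type*} [AddCommGroup M] [Module ℚ M] {ε δ : Fin n → M}

lemma add_mem_oddRset (i j : Fin n) : ε i + δ j ∈ oddRset n M ε δ :=
  Or.inl (Or.inl ⟨i, j, rfl⟩)

lemma sub_mem_oddRset_of_lt {i j : Fin n} (h : i < j) : ε i - δ j ∈ oddRset n M ε δ :=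
  Or.inl (Or.inr ⟨i, j, h, rfl⟩)

lemma sub_mem_oddRset_of_le {i j : Fin n} (h : i ≤ j) : δ i - ε j ∈ oddRset n M ε δ :=
  Or.inr ⟨i, j, h, rfl⟩

lemma shuffle_sub_shuffle_succ_mem_oddRset {p : ℕ} (hp : p + 1 < 2 * n) :
    shuffle δ ε p - shuffle δ ε (p + 1) ∈ oddRset n M ε δ := by
  rcases Nat.even_or_odd' p with ⟨j, rfl | rfl⟩
  · have hj : j < n := by omega
    rw [show shuffle δ ε (2 * j) = δ ⟨j, hj⟩ from shuffle_two_mul δ ε ⟨j, hj⟩,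
      show shuffle δ ε (2 * j + 1) = ε ⟨j, hj⟩ from shuffle_two_mul_add_one δ ε ⟨j, hj⟩]
    exact sub_mem_oddRset_of_le le_rfl
  · have hj : j + 1 < n := by omega
    rw [show shuffle δ ε (2 * j + 1) = ε ⟨j, by omega⟩ from
        shuffle_two_mul_add_one δ ε ⟨j, by omega⟩,
      show shuffle δ ε (2 * j + 1 + 1) = δ ⟨j + 1, hj⟩ from shuffle_two_mul δ ε ⟨j + 1, hj⟩]
    exact sub_mem_oddRset_of_lt (Fin.mk_lt_mk.2 j.lt_succ_self)

lemma sum_mul_add_sum_mul_mem_of_mem_closure_oddRset (hli : LinearIndependent ℚ (Sum.elim ε δ))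
    (T : AddSubmonoid ℚ) {a b : Fin n → ℚ} (hadd : ∀ i j, a i + b j ∈ T)
    (hlt : ∀ i j, i < j → a i - b j ∈ T) (hle : ∀ i j, i ≤ j → b i - a j ∈ T) {c d : Fin n → ℤ}
    (hmem : ∑ i, c i • ε i + ∑ j, d j • δ j ∈ AddSubmonoid.closure (oddRset n M ε δ)) :
    ∑ i, (c i : ℚ) * a i + ∑ j, (d j : ℚ) * b j ∈ T := by
  obtain ⟨φ, hφ⟩ := hli.exists_linearMap_apply_eq (Sum.elim a b)
  have hε (i : Fin n) : φ (ε i) = a i := hφ (.inl i)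
  have hδ (j : Fin n) : φ (δ j) = b j := hφ (.inr j)
  have hroots : oddRset n M ε δ ⊆ T.comap φ.toAddMonoidHom := by
    rintro _ ((⟨i, j, rfl⟩ | ⟨i, j, hij, rfl⟩) | ⟨i, j, hij, rfl⟩)
    · simpa [hε, hδ] using hadd i j
    · simpa [hε, hδ] using hlt i j hij
    · simpa [hε, hδ] using hle i j hij
  simpa [hε, hδ] using AddSubmonoid.closure_le.2 hroots hmem

lemma shuffledPartialSum_nonneg_of_mem_closure (hli : LinearIndependent ℚ (Sum.elim ε δ))
    {c d : Fin n → ℤ}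
    (hmem : ∑ i, c i • ε i + ∑ j, d j • δ j ∈ AddSubmonoid.closure (oddRset n M ε δ))
    (k : ℕ) : 0 ≤ shuffledPartialSum n d c k := by
  have := sum_mul_add_sum_mul_mem_of_mem_closure_oddRset hli (AddSubmonoid.nonneg ℚ)
    (a := fun i => if 2 * (i : ℕ) + 2 ≤ k then 1 else 0)
    (b := fun j => if 2 * (j : ℕ) + 1 ≤ k then 1 else 0)
    (fun _ _ => by simp only [AddSubmonoid.mem_nonneg]; split_ifs <;> norm_num)
    (fun i j hij => by simp only [AddSubmonoid.mem_nonneg]; split_ifs <;> norm_num; omega)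
    (fun i j hij => by simp only [AddSubmonoid.mem_nonneg]; split_ifs <;> norm_num; omega) hmem
  rw [AddSubmonoid.mem_nonneg] at this
  qify
  simpa [shuffledPartialSum, add_comm] using this

lemma exists_shuffledPartialSum_eq_two_mul_of_mem_closure
    (hli : LinearIndependent ℚ (Sum.elim ε δ)) {c d : Fin n → ℤ}
    (hmem : ∑ i, c i • ε i + ∑ j, d j • δ j ∈ AddSubmonoid.closure (oddRset n M ε δ)) :
    ∃ m : ℕ, shuffledPartialSum n d c (2 * n) = 2 * m := by
  obtain ⟨m, hm⟩ := sum_mul_add_sum_mul_mem_of_mem_closure_oddRset hli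
    (AddSubmonoid.multiples 2) (a := 1) (b := 1) (fun _ _ => ⟨1, by norm_num⟩)
    (fun _ _ _ => ⟨0, by simp⟩) (fun _ _ _ => ⟨0, by simp⟩) hmem
  simp only [Pi.one_apply, mul_one, nsmul_eq_mul] at hm
  refine ⟨m, ?_⟩
  rw [shuffledPartialSum_two_mul]
  qify
  linarith

lemma two_mul_le_shuffledPartialSum_of_mem_closure (hn : 0 < n)
    (hli : LinearIndependent ℚ (Sum.elim ε δ)) {c d : Fin n → ℤ}
    (hmem : ∑ i, c i • ε i + ∑ j, d j • δ j ∈ AddSubmonoid.closure (oddRset n M ε δ)) :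
    2 * c ⟨n - 1, Nat.sub_one_lt_of_lt hn⟩ ≤ shuffledPartialSum n d c (2 * n) := by
  set last : Fin n := ⟨n - 1, Nat.sub_one_lt_of_lt hn⟩
  have := sum_mul_add_sum_mul_mem_of_mem_closure_oddRset hli (AddSubmonoid.nonneg ℚ)
    (a := fun i => 1 - if i = last then 2 else 0) (b := 1)
    (fun _ _ => by simp only [AddSubmonoid.mem_nonneg]; split_ifs <;> norm_num)
    (fun i j hij => by
      have : i ≠ last := by simp only [ne_eq, Fin.ext_iff, last]; omega
      simp [this])
    (fun _ _ _ => by simp only [AddSubmonoid.mem_nonneg]; split_ifs <;> norm_num) hmem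
  rw [AddSubmonoid.mem_nonneg] at this
  simp only [mul_sub, mul_one, mul_ite, mul_zero, sum_sub_distrib, sum_ite_eq', mem_univ,
    ↓reduceIte, Pi.one_apply] at this
  rw [shuffledPartialSum_two_mul]
  qify
  linarith

lemma sum_smul_add_sum_smul_mem_closure_oddRset (hn : 0 < n) {c d : Fin n → ℤ}
    (hpartial : ∀ k, 1 ≤ k → k ≤ 2 * n - 1 → 0 ≤ shuffledPartialSum n d c k)
    (heven : ∃ m : ℕ, shuffledPartialSum n d c (2 * n) = 2 * m)
    (hlast : 2 * c ⟨n - 1, Nat.sub_one_lt_of_lt hn⟩ ≤ shuffledPartialSum n d c (2 * n)) :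
    ∑ i, c i • ε i + ∑ j, d j • δ j ∈ AddSubmonoid.closure (oddRset n M ε δ) := by
  set last : Fin n := ⟨n - 1, Nat.sub_one_lt_of_lt hn⟩
  obtain ⟨s, hs⟩ := heven
  set N := 2 * (last : ℕ)
  have hN : 2 * n = N + 1 + 1 := by simp only [N, last]; omega
  rw [← sum_shuffle_smul, hN, sum_range_succ, sum_range_succ_zsmul_by_parts,
    sum_range_shuffle, shuffle_two_mul, shuffle_two_mul_add_one, shuffle_two_mul_add_one]
  -- goal: `∑ k < N, S_{k+1} • (x_k - x_{k+1}) + S_{N+1} • δ last + c last • ε last ∈ _`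
  have htail : shuffledPartialSum n d c (N + 1) • δ last + c last • ε last
      = (s - c last) • (δ last - ε last) + (s : ℤ) • (ε last + δ last) := by
    have : shuffledPartialSum n d c (N + 1) + c last = 2 * s := by
      rw [← hs, hN, ← sum_range_shuffle, ← sum_range_shuffle, sum_range_succ _ (N + 1),
        shuffle_two_mul_add_one]
    rw [eq_sub_of_add_eq this]
    module
  rw [add_assoc, htail]
  refine add_mem (sum_mem fun k hk => ?_) (add_mem ?_ ?_)
  · have hk : k < N := mem_range.1 hk
    rw [sum_range_shuffle]
    exact AddSubmonoid.zsmul_mem_of_nonneg _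
      (AddSubmonoid.subset_closure (shuffle_sub_shuffle_succ_mem_oddRset (by omega)))
      (hpartial _ (by omega) (by omega))
  · exact AddSubmonoid.zsmul_mem_of_nonneg _
      (AddSubmonoid.subset_closure (sub_mem_oddRset_of_le le_rfl)) (by linarith)
  · exact AddSubmonoid.zsmul_mem_of_nonneg _
      (AddSubmonoid.subset_closure (add_mem_oddRset _ _)) (by positivity)

end OddRoots

/-- Odd-case dominance order: `(λ₀,λ₁) − (μ₀,μ₁)` is an ℕ-combination of the odd positive
roots iff the shuffled partial-sum inequalities (1.2) hold. -/
theorem odd_dominance_order_characterization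
    (n : ℕ) (hn : 0 < n) (M : Type*) [AddCommGroup M] [Module ℚ M]
    (ε δ : Fin n → M) (hli : LinearIndependent ℚ (Sum.elim ε δ))
    (l0 m0 l1 m1 : Fin n → ℤ) :
    ((∑ i : Fin n, (l0 i - m0 i) • ε i) + (∑ j : Fin n, (l1 j - m1 j) • δ j)
        ∈ AddSubmonoid.closure (oddRset n M ε δ)) ↔
      ((∀ k : ℕ, 1 ≤ k → k ≤ 2 * n - 1 →
          shuffledPartialSum n m1 m0 k ≤ shuffledPartialSum n l1 l0 k) ∧
       (∃ m : ℕ,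
          shuffledPartialSum n l1 l0 (2 * n) - shuffledPartialSum n m1 m0 (2 * n)
            = 2 * (m : ℤ)) ∧
       (shuffledPartialSum n m1 m0 (2 * n) - 2 * m0 ⟨n - 1, by omega⟩
          ≤ shuffledPartialSum n l1 l0 (2 * n) - 2 * l0 ⟨n - 1, by omega⟩)) := by
  have hdiff (k : ℕ) : shuffledPartialSum n l1 l0 k - shuffledPartialSum n m1 m0 k
      = shuffledPartialSum n (l1 - m1) (l0 - m0) k := (shuffledPartialSum_sub ..).symm
  have hc_last : (l0 - m0) ⟨n - 1, by omega⟩ = l0 ⟨n - 1, by omega⟩ - m0 ⟨n - 1, by omega⟩ :=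
    rfl
  constructor
  · intro hmem
    replace hmem : ∑ i, (l0 - m0) i • ε i + ∑ j, (l1 - m1) j • δ j ∈ _ := hmem
    refine ⟨fun k _ _ => ?_, ?_, ?_⟩
    · linarith [hdiff k, shuffledPartialSum_nonneg_of_mem_closure hli hmem k]
    · simpa only [hdiff] using exists_shuffledPartialSum_eq_two_mul_of_mem_closure hli hmem
    · linarith [hdiff (2 * n), two_mul_le_shuffledPartialSum_of_mem_closure hn hli hmem]
  · rintro ⟨hpartial, heven, hlast⟩
    refine sum_smul_add_sum_smul_mem_closure_oddRset hn (c := l0 - m0) (d := l1 - m1)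
      (fun k hk1 hk2 => ?_) ?_ ?_
    · linarith [hdiff k, hpartial k hk1 hk2]
    · simpa only [hdiff] using heven
    · linarith [hdiff (2 * n)]
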